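/- arXiv:1409.4302 — 3 statements merged into one kernel-verified Lean document; each statement's English description precedes it below -/
import Mathlib

section
/- Let (Δ_k) be square-integrable random variables with E Δ_k² ≤ K b^k for some K < ∞ and 0 ≤ b < 1. Let N be a ℕ-valued random variable independent of (Δ_k) with P(N ≥ k) > 0 for all k and ∑_{k=0}^∞ b^{k/2} / P(N ≥ k) < ∞. Then Z = ∑_{k=0}^N Δ_k / P(N ≥ k) has finite second moment. -/
/-!
By Minkowski's inequality in L²,
`‖Z‖₂ ≤ ∑ₖ ‖1_{N ≥ k} Δₖ‖₂ / P(N ≥ k) ≤ √K ∑ₖ b^{k/2} / P(N ≥ k) < ∞`.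
Formally `Z` is the pointwise limit of the partial sums (they are eventually constant), and
Fatou's lemma for L^p seminorms carries the triangle inequality over to the limit.
-/

open MeasureTheory ProbabilityTheory Filter Finset
open scoped Topology ENNReal

namespace MeasureTheory

variable {α E : Type*} {m : MeasurableSpace α} {μ : Measure α} [NormedAddCommGroup E]
  {p : ℝ≥0∞}

theorem eLpNorm_le_tsum_of_tendsto_sum {f : ℕ → α → E} {g : α → E}
    (hf : ∀ n, AEStronglyMeasurable (f n) μ) (hp : 1 ≤ p)
    (hg : ∀ᵐ x ∂μ, Tendsto (fun n => ∑ k ∈ range n, f k x) atTop (𝓝 (g x))) :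
    eLpNorm g p μ ≤ ∑' n, eLpNorm (f n) p μ := by
  refine Lp.eLpNorm_le_of_ae_tendsto (.of_forall fun n => ?_)
    (fun _ => aestronglyMeasurable_fun_sum _ fun k _ => hf k) hg
  calc eLpNorm (fun x => ∑ k ∈ range n, f k x) p μ
      = eLpNorm (∑ k ∈ range n, f k) p μ := by simp only [Finset.sum_fn]
    _ ≤ ∑ k ∈ range n, eLpNorm (f k) p μ := eLpNorm_sum_le (fun k _ => hf k) hp
    _ ≤ ∑' k, eLpNorm (f k) p μ := ENNReal.sum_le_tsum _

theorem memLp_of_tendsto_sum {f : ℕ → α → E} {g : α → E}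
    (hf : ∀ n, AEStronglyMeasurable (f n) μ) (hp : 1 ≤ p)
    (hsum : ∑' n, eLpNorm (f n) p μ ≠ ∞)
    (hg : ∀ᵐ x ∂μ, Tendsto (fun n => ∑ k ∈ range n, f k x) atTop (𝓝 (g x))) :
    MemLp g p μ :=
  ⟨aestronglyMeasurable_of_tendsto_ae atTop
      (fun _ => aestronglyMeasurable_fun_sum _ fun k _ => hf k) hg,
    (eLpNorm_le_tsum_of_tendsto_sum hf hp hg).trans_lt hsum.lt_top⟩

theorem eLpNorm_two_le_ofReal_sqrt {f : α → ℝ} (hf : MemLp f 2 μ) {C : ℝ}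
    (hC : ∫ x, f x ^ 2 ∂μ ≤ C) : eLpNorm f 2 μ ≤ ENNReal.ofReal √C := by
  rw [← ofReal_lpNorm hf,
    lpNorm_eq_integral_norm_rpow_toReal two_ne_zero ENNReal.ofNat_ne_top hf.1]
  refine ENNReal.ofReal_le_ofReal ?_
  simpa [Real.sqrt_eq_rpow] using Real.sqrt_le_sqrt hC

theorem eLpNorm_indicator_div_le {X : α → ℝ} (hX : MemLp X 2 μ) (s : Set α) {q C : ℝ}
    (hq : 0 ≤ q) (hC : ∫ x, X x ^ 2 ∂μ ≤ C) :
    eLpNorm (s.indicator fun x => X x / q) 2 μ ≤ ENNReal.ofReal (√C / q) := by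
  have hXq : ∫ x, (X x / q) ^ 2 ∂μ ≤ C / q ^ 2 := by
    simp_rw [div_pow]
    rw [integral_div]
    exact div_le_div_of_nonneg_right hC (sq_nonneg q)
  calc eLpNorm (s.indicator fun x => X x / q) 2 μ ≤ eLpNorm (fun x => X x / q) 2 μ :=
        eLpNorm_indicator_le _
    _ ≤ ENNReal.ofReal √(C / q ^ 2) :=
        eLpNorm_two_le_ofReal_sqrt (by simpa only [div_eq_mul_inv] using hX.mul_const q⁻¹) hXq
    _ = ENNReal.ofReal (√C / q) := by rw [Real.sqrt_div' _ (sq_nonneg q), Real.sqrt_sq hq]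

end MeasureTheory

theorem Finset.sum_range_ite_le_of_lt {M : Type*} [AddCommMonoid M] (a : ℕ → M) {m n : ℕ}
    (h : m < n) : ∑ k ∈ range n, (if k ≤ m then a k else 0) = ∑ k ∈ range (m + 1), a k := by
  rw [← Finset.sum_filter]
  congr 1
  ext k
  simp only [mem_filter, mem_range]
  omega

theorem stmt4_general {Ω : Type*} [MeasureSpace Ω] [IsProbabilityMeasure (ℙ : Measure Ω)]
    (Δ : ℕ → Ω → ℝ) (N : Ω → ℕ) (K b : ℝ)
    (hK : 0 ≤ K)
    (hNmeas : Measurable N)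
    (hL2 : ∀ k, MemLp (Δ k) 2)
    (hbound : ∀ k : ℕ, ∫ ω, (Δ k ω)^2 ≤ K * b^k)
    (hsum : Summable (fun k : ℕ => Real.sqrt (b^k) / (ℙ {ω | k ≤ N ω}).toReal)) :
    MemLp (fun ω => ∑ k ∈ Finset.range (N ω + 1),
      Δ k ω / (ℙ {ω' | k ≤ N ω'}).toReal) 2 := by
  set q : ℕ → ℝ := fun k => (ℙ {ω | k ≤ N ω}).toReal
  set f : ℕ → Ω → ℝ := fun k => {ω | k ≤ N ω}.indicator fun ω => Δ k ω / q k
  have hf_meas : ∀ k, AEStronglyMeasurable (f k) ℙ := fun k =>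
    ((hL2 k).1.mul_const (q k)⁻¹).indicator (hNmeas measurableSet_Ici)
  have hf_norm : ∀ k, eLpNorm (f k) 2 ℙ ≤ ENNReal.ofReal (√K * (√(b ^ k) / q k)) := by
    intro k
    rw [mul_div_assoc', ← Real.sqrt_mul hK]
    exact eLpNorm_indicator_div_le (hL2 k) _ ENNReal.toReal_nonneg (hbound k)
  have hf_sum : ∑' k, eLpNorm (f k) 2 ℙ ≠ ∞ := by
    refine ne_top_of_le_ne_top ?_ (ENNReal.tsum_le_tsum hf_norm)
    rw [← ENNReal.ofReal_tsum_of_nonneg (fun k => by positivity) (hsum.mul_left √K)]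
    exact ENNReal.ofReal_ne_top
  refine memLp_of_tendsto_sum hf_meas one_le_two hf_sum
    (.of_forall fun ω => tendsto_atTop_of_eventually_const (i₀ := N ω + 1) fun _ hn => ?_)
  simp only [f, Set.indicator_apply, Set.mem_ofPred_eq]
  exact Finset.sum_range_ite_le_of_lt _ hn

/-- Finite second moment of the randomized estimator under geometric decay. -/
theorem stmt4 {Ω : Type*} [MeasureSpace Ω] [IsProbabilityMeasure (ℙ : Measure Ω)]
    (Δ : ℕ → Ω → ℝ) (N : Ω → ℕ) (K b : ℝ)
    (hK : 0 ≤ K) (hb0 : 0 ≤ b) (hb1 : b < 1)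
    (hΔmeas : ∀ k, Measurable (Δ k)) (hNmeas : Measurable N)
    (hL2 : ∀ k, MemLp (Δ k) 2)
    (hbound : ∀ k : ℕ, ∫ ω, (Δ k ω)^2 ≤ K * b^k)
    (hindep : IndepFun N (fun ω k => Δ k ω))
    (hpos : ∀ k : ℕ, 0 < (ℙ {ω | k ≤ N ω}).toReal)
    (hsum : Summable (fun k : ℕ => Real.sqrt (b^k) / (ℙ {ω | k ≤ N ω}).toReal)) :
    MemLp (fun ω => ∑ k ∈ Finset.range (N ω + 1),
      Δ k ω / (ℙ {ω' | k ≤ N ω'}).toReal) 2 :=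
  stmt4_general Δ N K b hK hNmeas hL2 hbound hsum
end

section
/- Let τ_j, N_j (j ≥ 1) be i.i.d. copies of a pair (τ, N) of ℕ-valued random variables with E[(τ ∧ N)^{α+1}] < ∞, and suppose P(N ≥ k) ≥ (c/2) k^{-α} for all k ≥ m₀. Then almost surely, limsup_{n→∞} ∑_{k > m} (1/n) ∑_{j=1}^n 𝟙(τ_j ∧ N_j ≥ k) / P(N ≥ k) ≤ (2/c) · (α+1)^{-1} · C · E[(τ ∧ N)^{α+1} 𝟙(τ ∧ N ≥ m)] for all m ≥ m₀, where C is an absolute constant; in particular this bound tends to 0 as m → ∞. -/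
/-!
With `T j = τ_j ∧ N_j`, swapping the sums over `k` and `j` turns the `n`-th term into
`(1/n) ∑_j ∑_{m < k ≤ T j} 1 / P(N ≥ k)`. The tail bound gives `1 / P(N ≥ k) ≤ (2/c) k^α`, and
crudely `∑_{m < k ≤ T} k^α ≤ T^(α+1) 𝟙(T ≥ m)`; so the `n`-th term is at most `2/c` times the
empirical mean of `T_j^(α+1) 𝟙(T_j ≥ m)`, which converges a.s. to its expectation by the strong
law of large numbers (hence `C = α + 1`). That expectation tends to `0` by dominated convergence.
-/

open MeasureTheory ProbabilityTheory Filter Topology Finset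

noncomputable def tailPow (α : ℝ) (m t : ℕ) : ℝ := (t : ℝ) ^ (α + 1) * if m ≤ t then 1 else 0

section tailPow

variable {α : ℝ} {m t : ℕ}

lemma tailPow_nonneg : 0 ≤ tailPow α m t := by
  unfold tailPow; split_ifs <;> positivity

lemma tailPow_le : tailPow α m t ≤ (t : ℝ) ^ (α + 1) := by
  unfold tailPow; split_ifs <;> simp [Real.rpow_nonneg]

lemma tailPow_eq_zero_of_lt (h : t < m) : tailPow α m t = 0 := by
  simp [tailPow, not_le.2 h]

lemma tailPow_min (a b : ℕ) :
    tailPow α m (min a b) = (min (a : ℝ) b) ^ (α + 1) * if m ≤ min a b then 1 else 0 := by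
  simp [tailPow]

lemma sum_Ioc_rpow_le_tailPow (hα : 0 ≤ α) : ∑ k ∈ Ioc m t, (k : ℝ) ^ α ≤ tailPow α m t := by
  rcases lt_or_ge t m with htm | hmt
  · simp [Ioc_eq_empty_of_le htm.le, tailPow_eq_zero_of_lt htm]
  calc ∑ k ∈ Ioc m t, (k : ℝ) ^ α ≤ ∑ _k ∈ Ioc m t, (t : ℝ) ^ α :=
        sum_le_sum fun k hk => Real.rpow_le_rpow (by positivity)
          (by exact_mod_cast (mem_Ioc.1 hk).2) hα
    _ = ((t - m : ℕ) : ℝ) * (t : ℝ) ^ α := by rw [sum_const, Nat.card_Ioc, nsmul_eq_mul]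
    _ ≤ (t : ℝ) * (t : ℝ) ^ α := by gcongr; omega
    _ = tailPow α m t := by
        rw [tailPow, if_pos hmt, mul_one, Real.rpow_add_one' (by positivity) (by linarith),
          mul_comm]

end tailPow

lemma sum_Ioc_inv_le_tailPow {c α : ℝ} (hc : 0 < c) (hα : 0 < α) {P : ℕ → ℝ} {m₀ m : ℕ}
    (htail : ∀ k, m₀ ≤ k → c / 2 * (k : ℝ) ^ (-α) ≤ P k) (hm : m₀ ≤ m) (t : ℕ) :
    ∑ k ∈ Ioc m t, 1 / P k ≤ 2 / c * tailPow α m t := by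
  have hterm : ∀ k ∈ Ioc m t, 1 / P k ≤ 2 / c * (k : ℝ) ^ α := by
    intro k hk
    have hmk := (mem_Ioc.1 hk).1
    have hk : (0 : ℝ) < k := by exact_mod_cast (Nat.zero_le m).trans_lt hmk
    calc 1 / P k ≤ 1 / (c / 2 * (k : ℝ) ^ (-α)) :=
          one_div_le_one_div_of_le (by positivity) (htail k (by omega))
      _ = 2 / c * (k : ℝ) ^ α := by rw [Real.rpow_neg hk.le]; field_simp
  calc ∑ k ∈ Ioc m t, 1 / P k ≤ ∑ k ∈ Ioc m t, 2 / c * (k : ℝ) ^ α := sum_le_sum hterm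
    _ = 2 / c * ∑ k ∈ Ioc m t, (k : ℝ) ^ α := (mul_sum ..).symm
    _ ≤ 2 / c * tailPow α m t := by gcongr; exact sum_Ioc_rpow_le_tailPow hα.le

lemma hasSum_ite_lt_mean (g : ℕ → ℝ) (m n : ℕ) (T : ℕ → ℕ) :
    HasSum (fun k => if m < k then (1 / (n : ℝ)) * ∑ j ∈ range n,
        (if k ≤ T j then 1 else 0) / g k else 0)
      ((1 / (n : ℝ)) * ∑ j ∈ range n, ∑ k ∈ Ioc m (T j), 1 / g k) := by
  have hj : ∀ j ∈ range n, HasSum ((Ioc m (T j) : Set ℕ).indicator fun k => 1 / g k)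
      (∑ k ∈ Ioc m (T j), 1 / g k) :=
    fun j _ => hasSum_subtype_iff_indicator.1 (Finset.hasSum _ _)
  refine HasSum.congr_fun ((hasSum_sum hj).mul_left (1 / (n : ℝ))) fun k => ?_
  split_ifs with hmk
  · congr 1
    refine sum_congr rfl fun j _ => ?_
    by_cases hkT : k ≤ T j <;> simp [hmk, hkT]
  · simp [hmk]

lemma tsum_ite_lt_mean_le {c α : ℝ} (hc : 0 < c) (hα : 0 < α) {P : ℕ → ℝ} {m₀ m : ℕ}
    (htail : ∀ k, m₀ ≤ k → c / 2 * (k : ℝ) ^ (-α) ≤ P k) (hm : m₀ ≤ m) (n : ℕ) (T : ℕ → ℕ) :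
    ∑' k, (if m < k then (1 / (n : ℝ)) * ∑ j ∈ range n, (if k ≤ T j then 1 else 0) / P k else 0)
      ≤ 2 / c * ((∑ j ∈ range n, tailPow α m (T j)) / n) := by
  rw [(hasSum_ite_lt_mean P m n T).tsum_eq]
  calc (1 / (n : ℝ)) * ∑ j ∈ range n, ∑ k ∈ Ioc m (T j), 1 / P k
      ≤ (1 / (n : ℝ)) * ∑ j ∈ range n, 2 / c * tailPow α m (T j) := by
        gcongr with j
        exact sum_Ioc_inv_le_tailPow hc hα htail hm _
    _ = 2 / c * ((∑ j ∈ range n, tailPow α m (T j)) / n) := by rw [← mul_sum]; ring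

lemma limsup_le_of_le_of_tendsto {u v : ℕ → ℝ} {L : ℝ} (hu : ∀ n, 0 ≤ u n) (huv : ∀ n, u n ≤ v n)
    (hv : Tendsto v atTop (𝓝 L)) : limsup u atTop ≤ L :=
  hv.limsup_eq ▸ limsup_le_limsup (Eventually.of_forall huv)
    (isBoundedUnder_of ⟨0, hu⟩).isCoboundedUnder_le hv.isBoundedUnder_le

section Probability

variable {Ω : Type*} [MeasurableSpace Ω] {μ : Measure Ω}

lemma ae_tendsto_average_comp {β : Type*} [MeasurableSpace β] {X : ℕ → Ω → β} {Y : Ω → β}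
    (hindep : Pairwise fun i j => IndepFun (X i) (X j) μ)
    (hident : ∀ j, IdentDistrib (X j) Y μ μ) {h : β → ℝ} (hh : Measurable h)
    (hint : Integrable (fun ω => h (Y ω)) μ) :
    ∀ᵐ ω ∂μ, Tendsto (fun n : ℕ => (∑ j ∈ range n, h (X j ω)) / n) atTop
      (𝓝 (∫ ω, h (Y ω) ∂μ)) := by
  have hhX : ∀ j, IdentDistrib (fun ω => h (X j ω)) (fun ω => h (Y ω)) μ μ :=
    fun j => (hident j).comp hh
  have := strong_law_ae_real (fun j ω => h (X j ω)) ((hhX 0).integrable_iff.2 hint)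
    (fun i j hij => (hindep hij).comp hh hh) (fun j => (hhX j).trans (hhX 0).symm)
  rwa [(hhX 0).integral_eq] at this

variable {α : ℝ} {T : Ω → ℕ}

lemma integrable_tailPow (hT : AEMeasurable T μ)
    (hint : Integrable (fun ω => (T ω : ℝ) ^ (α + 1)) μ) (m : ℕ) :
    Integrable (fun ω => tailPow α m (T ω)) μ :=
  hint.mono' ((measurable_of_countable (tailPow α m)).comp_aemeasurable hT).aestronglyMeasurable
    (ae_of_all _ fun _ => by rw [Real.norm_of_nonneg tailPow_nonneg]; exact tailPow_le)

lemma tendsto_integral_tailPow (hT : AEMeasurable T μ)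
    (hint : Integrable (fun ω => (T ω : ℝ) ^ (α + 1)) μ) :
    Tendsto (fun m => ∫ ω, tailPow α m (T ω) ∂μ) atTop (𝓝 0) := by
  have := tendsto_integral_of_dominated_convergence (fun ω => (T ω : ℝ) ^ (α + 1))
    (fun m => (integrable_tailPow hT hint m).aestronglyMeasurable) hint
    (fun _ => ae_of_all _ fun _ => by rw [Real.norm_of_nonneg tailPow_nonneg]; exact tailPow_le)
    (ae_of_all _ fun ω => tendsto_const_nhds.congr' <|
      (eventually_gt_atTop (T ω)).mono fun _ hm => (tailPow_eq_zero_of_lt hm).symm)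
  simpa using this

end Probability

theorem stmt9_general {Ω : Type*} [MeasureSpace Ω]
    (τ N : Ω → ℕ)
    (TN : ℕ → Ω → ℕ × ℕ)
    (hiid : iIndepFun TN ℙ)
    (hident : ∀ j, IdentDistrib (TN j) (fun ω => (τ ω, N ω)) ℙ ℙ)
    (c α : ℝ) (hc : 0 < c) (hα : 0 < α) (m₀ : ℕ)
    (hmom : Integrable (fun ω => (min (τ ω) (N ω) : ℝ)^(α + 1)))
    (htail : ∀ k : ℕ, m₀ ≤ k → c / 2 * (k : ℝ)^(-α) ≤ (ℙ {ω | k ≤ N ω}).toReal) :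
    ∃ C : ℝ, 0 < C ∧
      (∀ᵐ ω ∂ℙ, ∀ m : ℕ, m₀ ≤ m →
        Filter.limsup (fun n : ℕ =>
          ∑' k : ℕ, if m < k then
            (1 / (n : ℝ)) * ∑ j ∈ Finset.range n,
              (if k ≤ min (TN j ω).1 (TN j ω).2 then 1 else 0)
                / (ℙ {ω' | k ≤ N ω'}).toReal
          else 0) Filter.atTop
        ≤ (2 / c) * (α + 1)⁻¹ * C *
            ∫ ω', (min (τ ω') (N ω') : ℝ)^(α + 1) *
              (if m ≤ min (τ ω') (N ω') then 1 else 0)) ∧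
      Tendsto (fun m : ℕ => (2 / c) * (α + 1)⁻¹ * C *
          ∫ ω', (min (τ ω') (N ω') : ℝ)^(α + 1) *
            (if m ≤ min (τ ω') (N ω') then 1 else 0))
        atTop (nhds 0) := by
  have hmin : AEMeasurable (fun ω => min (τ ω) (N ω)) :=
    (measurable_of_countable fun p : ℕ × ℕ => min p.1 p.2).comp_aemeasurable
      (hident 0).aemeasurable_snd
  have hmom' : Integrable (fun ω => ((min (τ ω) (N ω) : ℕ) : ℝ) ^ (α + 1)) := by
    simpa only [Nat.cast_min] using hmom
  have hconst : 2 / c * (α + 1)⁻¹ * (α + 1) = 2 / c := by field_simp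
  refine ⟨α + 1, by linarith, ?_, ?_⟩ <;> simp only [← tailPow_min, hconst]
  · rw [ae_all_iff]
    intro m
    filter_upwards [ae_tendsto_average_comp (fun i j hij => hiid.indepFun hij) hident
      (measurable_of_countable fun p : ℕ × ℕ => tailPow α m (min p.1 p.2))
      (integrable_tailPow hmin hmom' m)] with ω hω hm
    exact limsup_le_of_le_of_tendsto (fun n => tsum_nonneg fun k => by positivity)
      (fun n => tsum_ite_lt_mean_le hc hα htail hm n _) (hω.const_mul (2 / c))
  · simpa using (tendsto_integral_tailPow hmin hmom').const_mul (2 / c)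

/-- Truncation estimate (4.3)-(4.4) in the Glivenko-Cantelli argument. -/
theorem stmt9 {Ω : Type*} [MeasureSpace Ω] [IsProbabilityMeasure (ℙ : Measure Ω)]
    (τ N : Ω → ℕ) (hτ : Measurable τ) (hN : Measurable N)
    (TN : ℕ → Ω → ℕ × ℕ) (hTN : ∀ j, Measurable (TN j))
    (hiid : iIndepFun TN ℙ)
    (hident : ∀ j, IdentDistrib (TN j) (fun ω => (τ ω, N ω)) ℙ ℙ)
    (c α : ℝ) (hc : 0 < c) (hα : 0 < α) (m₀ : ℕ)
    (hmom : Integrable (fun ω => (min (τ ω) (N ω) : ℝ)^(α + 1)))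
    (htail : ∀ k : ℕ, m₀ ≤ k → c / 2 * (k : ℝ)^(-α) ≤ (ℙ {ω | k ≤ N ω}).toReal) :
    ∃ C : ℝ, 0 < C ∧
      (∀ᵐ ω ∂ℙ, ∀ m : ℕ, m₀ ≤ m →
        Filter.limsup (fun n : ℕ =>
          ∑' k : ℕ, if m < k then
            (1 / (n : ℝ)) * ∑ j ∈ Finset.range n,
              (if k ≤ min (TN j ω).1 (TN j ω).2 then 1 else 0)
                / (ℙ {ω' | k ≤ N ω'}).toReal
          else 0) Filter.atTop
        ≤ (2 / c) * (α + 1)⁻¹ * C *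
            ∫ ω', (min (τ ω') (N ω') : ℝ)^(α + 1) *
              (if m ≤ min (τ ω') (N ω') then 1 else 0)) ∧
      Tendsto (fun m : ℕ => (2 / c) * (α + 1)⁻¹ * C *
          ∫ ω', (min (τ ω') (N ω') : ℝ)^(α + 1) *
            (if m ≤ min (τ ω') (N ω') then 1 else 0))
        atTop (nhds 0) :=
  stmt9_general τ N TN hiid hident c α hc hα m₀ hmom htail
end

section
/- Let (Y_k), (Y'_k) be real-valued processes and τ a ℕ-valued random variable such that (Y_{τ+j} : j ≥ 0) has the same distribution as (Y'_{τ+j-1} : j ≥ 0) conditionally on each event {τ = i}, and such that ((Y_{τ+j}, Y'_{τ+j-1}) : j ≥ 0) is independent of τ, with Y'_k distributed as Y_k for each k. If f is bounded and Δ_k := (f(Y_k) − f(Y'_{k-1})) 𝟙(τ > k), then E Δ_k = E f(Y_k) − E f(Y_{k-1}). -/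
/-!
On `{τ = i}` with `i ≤ k`, the coupling identifies the conditional laws of `Y k` and `Y' (k - 1)`,
so `f (Y k) - f (Y' (k - 1))` integrates to zero there. Splitting `𝟙(k < τ) = 1 - ∑_{i ≤ k} 𝟙(τ = i)`
leaves `E f(Y k) - E f(Y' (k - 1))`, and `Y' (k - 1)` has the law of `Y (k - 1)`.
-/

open MeasureTheory ProbabilityTheory

section

variable {Ω E : Type*} [MeasurableSpace Ω] {μ : Measure Ω}
  [NormedAddCommGroup E] [NormedSpace ℝ E]

lemma setIntegral_eq_of_integral_cond_eq [IsFiniteMeasure μ] {φ ψ : Ω → E} {s : Set Ω}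
    (h : ∫ ω, φ ω ∂μ[|s] = ∫ ω, ψ ω ∂μ[|s]) : ∫ ω in s, φ ω ∂μ = ∫ ω in s, ψ ω ∂μ := by
  by_cases hs : μ s = 0
  · simp [Measure.restrict_eq_zero.mpr hs]
  · have hc : (μ s)⁻¹.toReal ≠ 0 :=
      ENNReal.toReal_ne_zero.mpr ⟨ENNReal.inv_ne_zero.mpr (measure_ne_top μ s),
        ENNReal.inv_ne_top.mpr hs⟩
    simp only [ProbabilityTheory.cond, integral_smul_measure] at h
    exact smul_right_injective E hc h

lemma integral_mul_ite_lt_eq_sub_sum {τ : Ω → ℕ} (hτ : Measurable τ) {g : Ω → ℝ}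
    (hg : Integrable g μ) (k : ℕ) :
    ∫ ω, g ω * (if k < τ ω then 1 else 0) ∂μ
      = ∫ ω, g ω ∂μ - ∑ i ∈ Finset.range (k + 1), ∫ ω in {ω | τ ω = i}, g ω ∂μ := by
  have hlt : MeasurableSet {ω | k < τ ω} := measurableSet_lt measurable_const hτ
  have hcompl : {ω | k < τ ω}ᶜ = ⋃ i ∈ Finset.range (k + 1), {ω | τ ω = i} := by
    ext ω
    simp
  calc ∫ ω, g ω * (if k < τ ω then 1 else 0) ∂μ
      = ∫ ω in {ω | k < τ ω}, g ω ∂μ := by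
        rw [← integral_indicator hlt]
        congr 1 with ω
        simp [Set.indicator_apply]
    _ = ∫ ω, g ω ∂μ - ∫ ω in {ω | k < τ ω}ᶜ, g ω ∂μ :=
        eq_sub_of_add_eq (integral_add_compl hlt hg)
    _ = _ := by
        rw [hcompl, integral_biUnion_finset (s := fun i => {ω | τ ω = i}) _
          (fun i _ => hτ (measurableSet_singleton i)) (Set.pairwiseDisjoint_fiber τ _)
          fun i _ => hg.integrableOn]

end

theorem stmt10_general {Ω : Type*} [MeasureSpace Ω] [IsProbabilityMeasure (ℙ : Measure Ω)]
    (Y Y' : ℕ → Ω → ℝ) (τ : Ω → ℕ)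
    (hτ : Measurable τ)
    (f : ℝ → ℝ) (hfm : Measurable f) (M : ℝ) (hfb : ∀ x, |f x| ≤ M)
    (hcond : ∀ i : ℕ,
      IdentDistrib (fun ω (j : ℕ) => Y (i + j) ω) (fun ω (j : ℕ) => Y' (i + j - 1) ω)
        (ℙ[|{ω | τ ω = i}]) (ℙ[|{ω | τ ω = i}]))
    (hmarg : ∀ k, IdentDistrib (Y' k) (Y k) ℙ ℙ) :
    ∀ k : ℕ, 1 ≤ k →
      ∫ ω, (f (Y k ω) - f (Y' (k - 1) ω)) * (if k < τ ω then 1 else 0)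
        = (∫ ω, f (Y k ω)) - ∫ ω, f (Y (k - 1) ω) := by
  intro k _
  have hint : ∀ X : Ω → ℝ, AEMeasurable X → Integrable (fun ω => f (X ω)) := fun X hX =>
    .of_bound (hfm.comp_aemeasurable hX).aestronglyMeasurable M (ae_of_all _ fun _ => hfb _)
  have hYk := hint _ (hmarg k).aemeasurable_snd
  have hY'k := hint _ (hmarg (k - 1)).aemeasurable_fst
  have hcoupled : ∀ i ∈ Finset.range (k + 1),
      ∫ ω in {ω | τ ω = i}, f (Y k ω) - f (Y' (k - 1) ω) = 0 := by
    intro i hi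
    have hik : i + (k - i) = k := Nat.add_sub_cancel' (Nat.lt_succ_iff.mp (Finset.mem_range.mp hi))
    have h := ((hcond i).comp (hfm.comp (measurable_pi_apply (k - i)))).integral_eq
    simp only [Function.comp_def, hik] at h
    rw [integral_sub hYk.integrableOn hY'k.integrableOn, sub_eq_zero]
    exact setIntegral_eq_of_integral_cond_eq h
  rw [integral_mul_ite_lt_eq_sub_sum hτ (g := fun ω => f (Y k ω) - f (Y' (k - 1) ω))
    (hYk.sub hY'k), Finset.sum_eq_zero hcoupled, sub_zero, integral_sub hYk hY'k]
  exact congrArg (_ - ·) ((hmarg (k - 1)).comp hfm).integral_eq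

/-- The distributional-coupling identity for the mean of the coupled differences. -/
theorem stmt10 {Ω : Type*} [MeasureSpace Ω] [IsProbabilityMeasure (ℙ : Measure Ω)]
    (Y Y' : ℕ → Ω → ℝ) (τ : Ω → ℕ)
    (hY : ∀ k, Measurable (Y k)) (hY' : ∀ k, Measurable (Y' k)) (hτ : Measurable τ)
    (f : ℝ → ℝ) (hfm : Measurable f) (M : ℝ) (hfb : ∀ x, |f x| ≤ M)
    (hcond : ∀ i : ℕ,
      IdentDistrib (fun ω (j : ℕ) => Y (i + j) ω) (fun ω (j : ℕ) => Y' (i + j - 1) ω)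
        (ℙ[|{ω | τ ω = i}]) (ℙ[|{ω | τ ω = i}]))
    (hindep : IndepFun (fun ω (j : ℕ) => (Y (τ ω + j) ω, Y' (τ ω + j - 1) ω)) τ)
    (hmarg : ∀ k, IdentDistrib (Y' k) (Y k) ℙ ℙ) :
    ∀ k : ℕ, 1 ≤ k →
      ∫ ω, (f (Y k ω) - f (Y' (k - 1) ω)) * (if k < τ ω then 1 else 0)
        = (∫ ω, f (Y k ω)) - ∫ ω, f (Y (k - 1) ω) :=
  stmt10_general Y Y' τ hτ f hfm M hfb hcond hmarg
end
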